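/- Let α ≥ 1 and y ≥ (4/5)α. Then for every integer n ≥ 1, (n²πy/(2α) − 1/2)·e^{n²πy/(2α)} − (n²π/α − 1/2) > 0. Consequently the derivative in y of √y·(ϑ₃(y/α) − ϑ₃(y/(2α))) is strictly positive, where ϑ₃(X) = 1 + 2Σ_{n=1}^∞ e^{−πn²X}. -/

import Mathlib

/-!
With `B = n²πy/(2α)`, the `n`-th term of the termwise derivative of `√y (ϑ₃(y/α) - ϑ₃(y/(2α)))` is
`e^{-2B}/√y · ((B - 1/2)e^B - (2B - 1/2))`, and `y ≥ 4α/5` gives `B ≥ 2π/5` whenever `n ≠ 0`.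
For `B ≥ 2π/5` the degree-5 Taylor polynomial of `e^B` already yields `(B - 1/2)e^B > 5B/2 - 1/2`.
This makes every term with `n ≠ 0` positive, and it is the stated inequality too, because
`n²π/α = 2B/y ≤ 5B/2` once `y ≥ 4/5`.
-/

open Real

/-- `ϑ₃(X) = Σ_{n∈ℤ} e^{−πn²X}`. -/
noncomputable def theta3 (X : ℝ) : ℝ :=
  ∑' n : ℤ, Real.exp (-π * (n : ℝ) ^ 2 * X)

lemma five_half_mul_sub_half_lt_mul_exp {B : ℝ} (hB : 2 * π / 5 ≤ B) :
    5 / 2 * B - 1 / 2 < (B - 1 / 2) * exp B := by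
  have hB₀ : 1.256 ≤ B := by linarith [pi_gt_d2]
  have htaylor := sum_le_exp_of_nonneg (by linarith : 0 ≤ B) 6
  simp only [Finset.sum_range_succ, Finset.sum_range_zero, Nat.factorial] at htaylor
  norm_num at htaylor
  -- in `t = B - 1.256` the Taylor bound leaves a polynomial with nonnegative coefficients
  obtain ⟨t, ht, rfl⟩ : ∃ t, 0 ≤ t ∧ B = 1.256 + t := ⟨B - 1.256, by linarith, by ring⟩
  have := mul_le_mul_of_nonneg_left htaylor (by linarith : (0 : ℝ) ≤ 1.256 + t - 1 / 2)
  nlinarith [pow_nonneg ht 2, pow_nonneg ht 3, pow_nonneg ht 4, pow_nonneg ht 5, pow_nonneg ht 6]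

lemma two_mul_pi_div_five_le {m α y : ℝ} (hα : 0 < α) (hy : 4 / 5 * α ≤ y) (hm : 1 ≤ m) :
    2 * π / 5 ≤ m * π * y / (2 * α) := by
  rw [le_div_iff₀ (by positivity)]
  have hπy : 0 ≤ π * y := mul_nonneg pi_pos.le (by linarith)
  nlinarith [mul_le_mul_of_nonneg_left hy pi_pos.le, mul_le_mul_of_nonneg_right hm hπy]

lemma summable_abs_pow_mul_exp_neg_pi_mul_sq (k : ℕ) {X : ℝ} (hX : 0 < X) :
    Summable fun n : ℤ => |(n : ℝ)| ^ k * exp (-π * (n : ℝ) ^ 2 * X) :=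
  (summable_pow_mul_jacobiTheta₂_term_bound 0 hX k).congr fun n => by push_cast; ring_nf

lemma summable_exp_neg_pi_mul_sq {X : ℝ} (hX : 0 < X) :
    Summable fun n : ℤ => exp (-π * (n : ℝ) ^ 2 * X) := by
  simpa using summable_abs_pow_mul_exp_neg_pi_mul_sq 0 hX

lemma summable_sq_mul_exp_neg_pi_mul_sq {X : ℝ} (hX : 0 < X) :
    Summable fun n : ℤ => (n : ℝ) ^ 2 * exp (-π * (n : ℝ) ^ 2 * X) := by
  simpa using summable_abs_pow_mul_exp_neg_pi_mul_sq 2 hX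

lemma hasDerivAt_theta3 {X : ℝ} (hX : 0 < X) :
    HasDerivAt theta3 (∑' n : ℤ, -π * (n : ℝ) ^ 2 * exp (-π * (n : ℝ) ^ 2 * X)) X := by
  have hterm (n : ℤ) (t : ℝ) : HasDerivAt (fun t => exp (-π * (n : ℝ) ^ 2 * t))
      (-π * (n : ℝ) ^ 2 * exp (-π * (n : ℝ) ^ 2 * t)) t := by
    simpa only [mul_comm (exp _)] using (hasDerivAt_const_mul (x := t) (-π * (n : ℝ) ^ 2)).exp
  have hbound (n : ℤ) (t : ℝ) (ht : t ∈ Set.Ioi (X / 2)) :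
      ‖-π * (n : ℝ) ^ 2 * exp (-π * (n : ℝ) ^ 2 * t)‖
        ≤ π * ((n : ℝ) ^ 2 * exp (-π * (n : ℝ) ^ 2 * (X / 2))) := by
    rw [norm_mul, norm_mul, norm_neg, norm_of_nonneg pi_pos.le, norm_of_nonneg (sq_nonneg _),
      norm_of_nonneg (exp_pos _).le, mul_assoc]
    have : -π * (n : ℝ) ^ 2 * t ≤ -π * (n : ℝ) ^ 2 * (X / 2) := by
      nlinarith [mul_nonneg pi_pos.le (sq_nonneg (n : ℝ)), Set.mem_Ioi.1 ht]
    gcongr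
  exact hasDerivAt_tsum_of_isPreconnected (g := fun (n : ℤ) t => exp (-π * (n : ℝ) ^ 2 * t))
    ((summable_sq_mul_exp_neg_pi_mul_sq (half_pos hX)).mul_left π) isOpen_Ioi isPreconnected_Ioi
    (fun n t _ => hterm n t) hbound (half_lt_self hX) (summable_exp_neg_pi_mul_sq hX)
    (half_lt_self hX)

lemma hasSum_theta3 {X : ℝ} (hX : 0 < X) :
    HasSum (fun n : ℤ => exp (-π * (n : ℝ) ^ 2 * X)) (theta3 X) :=
  (summable_exp_neg_pi_mul_sq hX).hasSum

lemma hasSum_deriv_theta3 {X : ℝ} (hX : 0 < X) :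
    HasSum (fun n : ℤ => -π * (n : ℝ) ^ 2 * exp (-π * (n : ℝ) ^ 2 * X)) (deriv theta3 X) := by
  rw [(hasDerivAt_theta3 hX).deriv]
  exact ((summable_sq_mul_exp_neg_pi_mul_sq hX).mul_left (-π)).congr (fun n => by ring) |>.hasSum

lemma hasDerivAt_sqrt_mul_theta3_sub {a b y : ℝ} (ha : 0 < a) (hb : 0 < b) (hy : 0 < y) :
    HasDerivAt (fun t => √t * (theta3 (t / a) - theta3 (t / b)))
      (1 / (2 * √y) * (theta3 (y / a) - theta3 (y / b))
        + √y * (deriv theta3 (y / a) / a - deriv theta3 (y / b) / b)) y := by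
  have hθ {c : ℝ} (hc : 0 < c) :
      HasDerivAt (fun t => theta3 (t / c)) (deriv theta3 (y / c) / c) y := by
    have := (hasDerivAt_theta3 (div_pos hy hc)).differentiableAt.hasDerivAt.comp y
      ((hasDerivAt_id' y).div_const c)
    rwa [mul_one_div] at this
  exact (hasDerivAt_sqrt hy.ne').mul ((hθ ha).sub (hθ hb))

/-- The derivative at `y` of `t ↦ √t (e^{-πn²t/a} - e^{-πn²t/b})`. -/
noncomputable def thetaDiffDerivTerm (a b y : ℝ) (n : ℤ) : ℝ :=
  1 / (2 * √y) * (exp (-π * (n : ℝ) ^ 2 * (y / a)) - exp (-π * (n : ℝ) ^ 2 * (y / b)))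
    + √y * (-π * (n : ℝ) ^ 2 * exp (-π * (n : ℝ) ^ 2 * (y / a)) / a
      - -π * (n : ℝ) ^ 2 * exp (-π * (n : ℝ) ^ 2 * (y / b)) / b)

lemma hasSum_thetaDiffDerivTerm {a b y : ℝ} (ha : 0 < a) (hb : 0 < b) (hy : 0 < y) :
    HasSum (thetaDiffDerivTerm a b y)
      (1 / (2 * √y) * (theta3 (y / a) - theta3 (y / b))
        + √y * (deriv theta3 (y / a) / a - deriv theta3 (y / b) / b)) :=
  (((hasSum_theta3 (div_pos hy ha)).sub (hasSum_theta3 (div_pos hy hb))).mul_left _).add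
    ((((hasSum_deriv_theta3 (div_pos hy ha)).div_const a).sub
      ((hasSum_deriv_theta3 (div_pos hy hb)).div_const b)).mul_left _)

lemma thetaDiffDerivTerm_eq (n : ℤ) {α y : ℝ} (hα : α ≠ 0) (hy : 0 < y) :
    thetaDiffDerivTerm α (2 * α) y n
      = exp (-(2 * ((n : ℝ) ^ 2 * π * y / (2 * α)))) / √y
        * (((n : ℝ) ^ 2 * π * y / (2 * α) - 1 / 2) * exp ((n : ℝ) ^ 2 * π * y / (2 * α))
          - (2 * ((n : ℝ) ^ 2 * π * y / (2 * α)) - 1 / 2)) := by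
  set B := (n : ℝ) ^ 2 * π * y / (2 * α)
  have h₁ : -π * (n : ℝ) ^ 2 * (y / α) = -(2 * B) := by simp only [B]; field_simp
  have h₂ : -π * (n : ℝ) ^ 2 * (y / (2 * α)) = -(2 * B) + B := by simp only [B]; field_simp; ring
  have hs₀ : 0 < √y := sqrt_pos.2 hy
  rw [thetaDiffDerivTerm, h₁, h₂, exp_add]
  simp only [B]
  field_simp
  rw [sq_sqrt hy.le]
  ring

lemma thetaDiffDerivTerm_pos {α y : ℝ} (hα : 0 < α) (hy : 4 / 5 * α ≤ y) {n : ℤ} (hn : n ≠ 0) :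
    0 < thetaDiffDerivTerm α (2 * α) y n := by
  have hy₀ : 0 < y := by linarith
  have hn₁ : 1 ≤ (n : ℝ) ^ 2 :=
    (one_le_sq_iff_one_le_abs _).2 (by exact_mod_cast Int.one_le_abs hn)
  have hB := two_mul_pi_div_five_le hα hy hn₁
  have hkey := five_half_mul_sub_half_lt_mul_exp hB
  have hs₀ := sqrt_pos.2 hy₀
  rw [thetaDiffDerivTerm_eq n hα.ne' hy₀]
  exact mul_pos (by positivity) (by linarith [pi_pos])

lemma thetaDiffDerivTerm_nonneg {α y : ℝ} (hα : 0 < α) (hy : 4 / 5 * α ≤ y) (n : ℤ) :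
    0 ≤ thetaDiffDerivTerm α (2 * α) y n := by
  rcases eq_or_ne n 0 with rfl | hn
  · simp [thetaDiffDerivTerm]
  · exact (thetaDiffDerivTerm_pos hα hy hn).le

theorem deriv_sqrt_mul_theta3_diff_pos (α y : ℝ) (hα : 1 ≤ α) (hy : 4 / 5 * α ≤ y) :
    (∀ n : ℕ, 1 ≤ n →
      0 < ((n : ℝ) ^ 2 * π * y / (2 * α) - 1 / 2) * Real.exp ((n : ℝ) ^ 2 * π * y / (2 * α))
            - ((n : ℝ) ^ 2 * π / α - 1 / 2)) ∧
    0 < deriv (fun t : ℝ => Real.sqrt t * (theta3 (t / α) - theta3 (t / (2 * α)))) y := by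
  have hα₀ : 0 < α := by linarith
  have hy₀ : 0 < y := by linarith
  refine ⟨fun n hn => ?_, ?_⟩
  · have hn₁ : (1 : ℝ) ≤ (n : ℝ) ^ 2 := one_le_pow₀ (by exact_mod_cast hn)
    have hkey := five_half_mul_sub_half_lt_mul_exp (two_mul_pi_div_five_le hα₀ hy hn₁)
    have hcoef : (n : ℝ) ^ 2 * π / α ≤ 5 / 2 * ((n : ℝ) ^ 2 * π * y / (2 * α)) := by
      rw [div_le_iff₀ hα₀]
      field_simp
      nlinarith [mul_nonneg (sq_nonneg (n : ℝ)) pi_pos.le]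
    linarith
  · rw [(hasDerivAt_sqrt_mul_theta3_sub hα₀ (by positivity) hy₀).deriv]
    exact hasSum_lt (f := 0) (thetaDiffDerivTerm_nonneg hα₀ hy)
      (thetaDiffDerivTerm_pos hα₀ hy one_ne_zero) hasSum_zero (hasSum_thetaDiffDerivTerm hα₀ (by positivity) hy₀)
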